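/- Let u₁, u₂, u₃ ∈ ℝ² be affinely independent points and let u₄ lie in the interior of the triangle T with vertices u₁, u₂, u₃. Let (K₄)_ℓ be the union of the six closed segments u_iu_j, 1 ≤ i < j ≤ 4. Then diam((K₄)_ℓ) > per(T)/2, where per(T) = ‖u₁−u₂‖ + ‖u₂−u₃‖ + ‖u₃−u₁‖ is the perimeter of T. -/

import Mathlib

open Set
open scoped ENNReal

noncomputable section

attribute [local instance] Classical.propDecidable

/-- Points of the Euclidean plane. -/
abbrev Pt : Type := EuclideanSpace ℝ (Fin 2)

/-- Intrinsic (geodesic) distance inside a set `X ⊆ ℝ²`: the infimum of the lengths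
(total variations) of continuous paths from `p` to `q` whose image lies in `X`. -/
def idist (X : Set Pt) (p q : Pt) : ℝ≥0∞ :=
  ⨅ (γ : ℝ → Pt) (_ : ContinuousOn γ (Set.Icc 0 1)) (_ : γ '' Set.Icc 0 1 ⊆ X)
    (_ : γ 0 = p) (_ : γ 1 = q), eVariationOn γ (Set.Icc 0 1)

/-- Eccentricity of a point within `X`. -/
def ecc (X : Set Pt) (p : Pt) : ℝ≥0∞ := ⨆ q ∈ X, idist X p q

/-- Intrinsic diameter of `X`. -/
def idiam (X : Set Pt) : ℝ≥0∞ := ⨆ p ∈ X, ecc X p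

/-- A plane Euclidean network: a finite set of vertices in the plane together with a
finite set of straight-line edges (recorded as ordered pairs of distinct vertices, each
edge recorded exactly once), such that two distinct edges meet only in common endpoints. -/
structure PlaneNetwork where
  V : Finset Pt
  Edg : Finset (Pt × Pt)
  ends_mem : ∀ e ∈ Edg, e.1 ∈ V ∧ e.2 ∈ V
  ends_ne : ∀ e ∈ Edg, e.1 ≠ e.2
  no_swap : ∀ e ∈ Edg, (e.2, e.1) ∉ Edg
  vertex_cover : ∀ v ∈ V, ∃ e ∈ Edg, v = e.1 ∨ v = e.2
  plane : ∀ e ∈ Edg, ∀ f ∈ Edg, e ≠ f →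
    segment ℝ e.1 e.2 ∩ segment ℝ f.1 f.2 ⊆ ({e.1, e.2} ∩ {f.1, f.2} : Set Pt)

namespace PlaneNetwork

/-- The locus of a network: the union of all its (closed) edges. -/
def locus (N : PlaneNetwork) : Set Pt := ⋃ e ∈ N.Edg, segment ℝ e.1 e.2

/-- A network is connected when its locus is path-connected. -/
def Connected (N : PlaneNetwork) : Prop := IsPathConnected N.locus

/-- `u` and `v` are joined by an edge of the network. -/
def IsEdge (N : PlaneNetwork) (u v : Pt) : Prop := (u, v) ∈ N.Edg ∨ (v, u) ∈ N.Edg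

/-- A vertex is pendant if it is an endpoint of exactly one edge. -/
def IsPendantVertex (N : PlaneNetwork) (v : Pt) : Prop :=
  v ∈ N.V ∧ (N.Edg.filter (fun e => e.1 = v ∨ e.2 = v)).card = 1

/-- The number of pendant vertices of a network. -/
def pendantCount (N : PlaneNetwork) : ℕ := (N.V.filter fun v => N.IsPendantVertex v).card

end PlaneNetwork

/-- The union of a set with all the segments in a list. -/
def insertSegs (X : Set Pt) (L : List (Pt × Pt)) : Set Pt :=
  X ∪ ⋃ s ∈ L, segment ℝ s.1 s.2

/-- The segments of the list are inserted iteratively: the endpoints of the first one lie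
on `X`, and the endpoints of each subsequent segment lie on the union of `X` with the
previously inserted segments. -/
def ValidSegs (X : Set Pt) : List (Pt × Pt) → Prop
  | [] => True
  | s :: rest => s.1 ∈ X ∧ s.2 ∈ X ∧ ValidSegs (X ∪ segment ℝ s.1 s.2) rest

/-- A shortcut set for `X`: a finite sequence of iteratively inserted segments whose
insertion strictly decreases the intrinsic diameter. -/
def IsShortcutSet (X : Set Pt) (L : List (Pt × Pt)) : Prop :=
  ValidSegs X L ∧ idiam (insertSegs X L) < idiam X

/-- `X` admits a shortcut set. -/
def HasShortcutSet (X : Set Pt) : Prop := ∃ L, IsShortcutSet X L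

/-- The shortcut number: the minimum size of a shortcut set. -/
def scn (X : Set Pt) : ℕ :=
  sInf {k | ∃ L : List (Pt × Pt), L.length = k ∧ IsShortcutSet X L}

/-- The locus of a plane embedding of `K₄`: the union of the six closed segments
joining the four points. -/
def K4locus (u₁ u₂ u₃ u₄ : Pt) : Set Pt :=
  segment ℝ u₁ u₂ ∪ segment ℝ u₁ u₃ ∪ segment ℝ u₁ u₄ ∪
    segment ℝ u₂ u₃ ∪ segment ℝ u₂ u₄ ∪ segment ℝ u₃ u₄

/-!
Put `p` inside the spoke `u₃u₄` and `q` inside the side `u₁u₂`. Each of these open segments meets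
the rest of the locus only at its endpoints, so a path from `p` to `q` must pass through `u₃` or
`u₄` and afterwards through `u₁` or `u₂`; its length is at least one of the four broken-line
lengths `|p v| + |v w| + |w q|`. Because `u₄` lies strictly inside the triangle, the strict
triangle inequalities leave enough room to place `p` and `q` so that all four broken lines are
longer than the half-perimeter.
-/

theorem IsPreconnected.inter_nonempty_of_isClosed_diff {α : Type*} [TopologicalSpace α]
    {s X S E : Set α} (hs : IsPreconnected s) (hsX : s ⊆ X) (hXS : IsClosed (X \ S))
    (hS : closure S ⊆ S ∪ E) (hin : (s ∩ S).Nonempty) (hout : (s \ S).Nonempty) :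
    (s ∩ E).Nonempty := by
  by_contra hE
  have hcl : ∀ z ∈ s, z ∈ closure S → z ∈ S := fun z hz hzS =>
    (hS hzS).resolve_right fun hzE => hE ⟨z, hz, hzE⟩
  obtain ⟨z, hzs, hzX, hzS⟩ := hs (X \ S)ᶜ (closure S)ᶜ hXS.isOpen_compl
    isClosed_closure.isOpen_compl
    (fun z hz => (em (z ∈ S)).imp (fun h h' => h'.2 h) (fun h h' => h (hcl z hz h')))
    (hin.mono (inter_subset_inter_right _ fun z hz h' => h'.2 hz))
    (hout.mono fun z hz => ⟨hz.1, fun h => hz.2 (hcl z hz.1 h)⟩)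
  exact hzS (subset_closure (by_contra fun h => hzX ⟨hsX hzs, h⟩))

theorem exists_route_lengths_gt {a b c d d₁ d₂ : ℝ} (hd : 0 < d) (ha : a < d₂ + d)
    (hb : b < d₁ + d) (hab : a < b + c) (hba : b < a + c) (hd₁ : d₁ ≤ c + d₂)
    (hd₂ : d₂ ≤ c + d₁) :
    ∃ α ∈ Ioo 0 d, ∃ w ∈ Ioo 0 c,
      (a + b + c) / 2 < α + b + w ∧ (a + b + c) / 2 < α + a + (c - w) ∧
      (a + b + c) / 2 < d - α + d₁ + w ∧ (a + b + c) / 2 < d - α + d₂ + (c - w) := by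
  -- `β` is `d - α`; adding the last two inequalities shows it must exceed `(a + b - d₁ - d₂) / 2`.
  obtain ⟨β, hβ₁, hβ₂⟩ :=
    exists_between (max_lt hd (by linarith) : max 0 ((a + b - d₁ - d₂) / 2) < d)
  obtain ⟨hβ₀, hβ⟩ := max_lt_iff.1 hβ₁
  set s := (a + b + c) / 2 with hs
  obtain ⟨w, hw₁, hw₂⟩ := exists_between (show
      max (max (s - (d - β) - b) (s - β - d₁)) 0 <
        min (min (c - s + (d - β) + a) (c - s + β + d₂)) c by
    simp only [max_lt_iff, lt_min_iff]
    refine ⟨⟨⟨⟨?_, ?_⟩, ?_⟩, ⟨?_, ?_⟩, ?_⟩, ⟨?_, ?_⟩, ?_⟩ <;> linarith)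
  simp only [max_lt_iff, lt_min_iff] at hw₁ hw₂
  exact ⟨d - β, ⟨by linarith, by linarith⟩, w, ⟨by linarith, by linarith⟩,
    by linarith, by linarith, by linarith, by linarith⟩

theorem edist_add_edist_add_edist_le_eVariationOn {α : Type*} [PseudoEMetricSpace α]
    (f : ℝ → α) {a b c d : ℝ} (hab : a ≤ b) (hbc : b ≤ c) (hcd : c ≤ d) :
    edist (f a) (f b) + edist (f b) (f c) + edist (f c) (f d) ≤ eVariationOn f (Icc a d) := by
  have h₁ := eVariationOn.Icc_add_Icc f hab (hbc.trans hcd) (mem_univ b)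
  have h₂ := eVariationOn.Icc_add_Icc f hbc hcd (mem_univ c)
  simp only [univ_inter] at h₁ h₂
  rw [← h₁, ← h₂, add_assoc]
  exact add_le_add (eVariationOn.edist_le f ⟨le_rfl, hab⟩ ⟨hab, le_rfl⟩) <| add_le_add
    (eVariationOn.edist_le f ⟨le_rfl, hbc⟩ ⟨hbc, le_rfl⟩)
    (eVariationOn.edist_le f ⟨le_rfl, hcd⟩ ⟨hcd, le_rfl⟩)

section Segments

variable {E : Type*} [NormedAddCommGroup E] [NormedSpace ℝ E]

theorem isClosed_segment (x y : E) : IsClosed (segment ℝ x y) :=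
  closure_openSegment (𝕜 := ℝ) x y ▸ isClosed_closure

theorem isClosed_segment_union_diff_openSegment {x y : E} {C : Set E} (hC : IsClosed C)
    (hx : x ∈ C) (hy : y ∈ C) (hdisj : Disjoint (openSegment ℝ x y) C) :
    IsClosed ((segment ℝ x y ∪ C) \ openSegment ℝ x y) := by
  convert hC using 1
  ext z
  rw [← insert_endpoints_openSegment]
  constructor
  · rintro ⟨(rfl | rfl | hz) | hz, hzo⟩
    exacts [hx, hy, absurd hz hzo, hz]
  · exact fun hz => ⟨Or.inr hz, hdisj.notMem_of_mem_right hz⟩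

theorem exists_mem_pair_of_isClosed_diff_openSegment {X : Set E} {x y : E}
    (hX : IsClosed (X \ openSegment ℝ x y)) {γ : ℝ → E} {a b : ℝ}
    (hγ : ContinuousOn γ (Icc a b)) (hγX : γ '' Icc a b ⊆ X) {t t' : ℝ} (ht : t ∈ Icc a b)
    (ht' : t' ∈ Icc a b) (hin : γ t ∈ openSegment ℝ x y) (hout : γ t' ∉ openSegment ℝ x y) :
    ∃ τ ∈ Icc a b, γ τ ∈ ({x, y} : Set E) := by
  have hcl : closure (openSegment ℝ x y) ⊆ openSegment ℝ x y ∪ {x, y} := by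
    rw [closure_openSegment, ← insert_endpoints_openSegment, union_insert, union_singleton]
  obtain ⟨_, ⟨τ, hτ, rfl⟩, hτE⟩ := (isPreconnected_Icc.image γ hγ).inter_nonempty_of_isClosed_diff
    hγX hX hcl ⟨γ t, mem_image_of_mem γ ht, hin⟩ ⟨γ t', mem_image_of_mem γ ht', hout⟩
  exact ⟨τ, hτ, hτE⟩

theorem disjoint_openSegment_segment_of_not_collinear {x y z : E}
    (h : ¬ Collinear ℝ {x, y, z}) : Disjoint (openSegment ℝ x y) (segment ℝ x z) := by
  rw [Set.disjoint_left]
  intro p hpy hpz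
  have hxy : x ≠ y := by rintro rfl; simp [collinear_pair] at h
  have hpx : x ≠ p := by rintro rfl; exact hxy (left_mem_openSegment_iff.1 hpy)
  have hxpy : Collinear ℝ {x, p, y} :=
    (mem_segment_iff_wbtw.1 (openSegment_subset_segment ℝ x y hpy)).collinear
  have hxpz : Collinear ℝ {z, x, p} := by
    rw [Set.insert_comm, Set.pair_comm]
    exact (mem_segment_iff_wbtw.1 hpz).collinear
  refine h (((hxpy.collinear_insert_iff_of_ne (by simp) (by simp) hpx).2 hxpz).subset ?_)
  intro w; simp only [mem_insert_iff, mem_singleton_iff]; tauto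

theorem disjoint_segment_of_affineMap_nonpos_of_pos (f : E →ᵃ[ℝ] ℝ) {x₁ x₂ y₁ y₂ : E}
    (hx₁ : f x₁ ≤ 0) (hx₂ : f x₂ ≤ 0) (hy₁ : 0 < f y₁) (hy₂ : 0 < f y₂) :
    Disjoint (segment ℝ x₁ x₂) (segment ℝ y₁ y₂) :=
  ((Iic_disjoint_Ioi le_rfl).preimage f).mono
    (((convex_Iic 0).affine_preimage f).segment_subset hx₁ hx₂)
    (((convex_Ioi 0).affine_preimage f).segment_subset hy₁ hy₂)

theorem dist_lt_dist_add_dist_of_not_collinear [StrictConvexSpace ℝ E] {x y z : E}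
    (h : ¬ Collinear ℝ {x, y, z}) :
    dist x z < dist x y + dist y z :=
  dist_lt_dist_add_dist_iff.2 fun hw => h hw.collinear

theorem exists_mem_openSegment_dist_eq {x y : E} {r : ℝ} (hr : r ∈ Ioo 0 (dist x y)) :
    ∃ p ∈ openSegment ℝ x y, dist p x = r ∧ dist p y = dist x y - r := by
  have hxy : 0 < dist x y := hr.1.trans hr.2
  have hθ : r / dist x y ∈ Ioo 0 1 := ⟨div_pos hr.1 hxy, (div_lt_one hxy).2 hr.2⟩
  refine ⟨AffineMap.lineMap x y (r / dist x y), ?_, ?_, ?_⟩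
  · rw [openSegment_eq_image_lineMap]
    exact mem_image_of_mem _ hθ
  · rw [dist_lineMap_left, Real.norm_of_nonneg hθ.1.le, div_mul_cancel₀ _ hxy.ne']
  · rw [dist_lineMap_right, Real.norm_of_nonneg (sub_pos.2 hθ.2).le, sub_mul, one_mul,
      div_mul_cancel₀ _ hxy.ne']

theorem exists_mem_openSegment_half_perimeter_lt [StrictConvexSpace ℝ E] {x₁ x₂ y₁ y₂ : E}
    (h₁ : ¬ Collinear ℝ {y₁, x₁, x₂}) (h₂ : ¬ Collinear ℝ {y₂, x₁, x₂})
    (h₃ : ¬ Collinear ℝ {y₁, y₂, x₁}) :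
    ∃ p ∈ openSegment ℝ x₁ x₂, ∃ q ∈ openSegment ℝ y₁ y₂,
      ∀ x ∈ ({x₁, x₂} : Set E), ∀ y ∈ ({y₁, y₂} : Set E),
        (dist y₁ y₂ + dist y₂ x₁ + dist x₁ y₁) / 2 < dist p x + dist x y + dist y q := by
  have hx : x₁ ≠ x₂ := by rintro rfl; simp [collinear_pair] at h₁
  have ha := dist_lt_dist_add_dist_of_not_collinear (x := y₂) (y := x₂) (z := x₁)
    (by rwa [Set.pair_comm])
  have hb := dist_lt_dist_add_dist_of_not_collinear (x := y₁) (y := x₂) (z := x₁)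
    (by rwa [Set.pair_comm])
  have hab := dist_lt_dist_add_dist_of_not_collinear (x := y₂) (y := y₁) (z := x₁)
    (by rwa [Set.insert_comm])
  have hba := dist_lt_dist_add_dist_of_not_collinear h₃
  have := dist_comm x₁ x₂; have := dist_comm y₁ y₂; have := dist_comm x₁ y₁
  have := dist_comm x₂ y₁; have := dist_comm x₂ y₂; have := dist_comm x₁ y₂
  obtain ⟨α, hα, w, hw, h₁₁, h₁₂, h₂₁, h₂₂⟩ := exists_route_lengths_gt (a := dist y₂ x₁)
    (b := dist x₁ y₁) (c := dist y₁ y₂) (d := dist x₁ x₂) (d₁ := dist x₂ y₁) (d₂ := dist x₂ y₂)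
    (dist_pos.2 hx) (by linarith) (by linarith) (by linarith) (by linarith)
    (by linarith [dist_triangle x₂ y₂ y₁]) (by linarith [dist_triangle x₂ y₁ y₂])
  obtain ⟨p, hp, hpx₁, hpx₂⟩ := exists_mem_openSegment_dist_eq hα
  obtain ⟨q, hq, hqy₁, hqy₂⟩ := exists_mem_openSegment_dist_eq hw
  refine ⟨p, hp, q, hq, ?_⟩
  simp only [mem_insert_iff, mem_singleton_iff, forall_eq_or_imp, forall_eq]
  refine ⟨⟨?_, ?_⟩, ?_, ?_⟩ <;> linarith [dist_comm y₁ q, dist_comm y₂ q]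

end Segments

theorem AffineBasis.not_collinear_of_coord_ne_zero {ι k V P : Type*} [Field k] [AddCommGroup V]
    [Module k V] [AddTorsor V P] (b : AffineBasis ι k P) {i j l : ι} (hij : i ≠ j)
    (hil : i ≠ l) (hjl : j ≠ l) {z : P} (hz : b.coord i z ≠ 0) : ¬ Collinear k {b j, b l, z} := by
  intro h
  obtain ⟨r, rfl⟩ := mem_affineSpan_pair_iff_exists_lineMap_eq.1
    (h.mem_affineSpan_of_mem_of_ne (p₁ := b j) (p₂ := b l) (p₃ := z) (by simp) (by simp) (by simp)
      (b.ind.injective.ne hjl))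
  simp [AffineMap.apply_lineMap, b.coord_apply_ne hij, b.coord_apply_ne hil] at hz

theorem exists_affineBasis_coord_pos_of_mem_interior_convexHull {ι E : Type*} [Finite ι]
    [NormedAddCommGroup E] [NormedSpace ℝ E] [FiniteDimensional ℝ E] {u : ι → E}
    (hu : AffineIndependent ℝ u) {z : E} (hz : z ∈ interior (convexHull ℝ (range u))) :
    ∃ b : AffineBasis ι ℝ E, ⇑b = u ∧ ∀ i, 0 < b.coord i z := by
  let b : AffineBasis ι ℝ E :=
    ⟨u, hu, interior_convexHull_nonempty_iff_affineSpan_eq_top.1 ⟨z, hz⟩⟩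
  have hb : ⇑b = u := rfl
  refine ⟨b, hb, ?_⟩
  rwa [← hb, b.interior_convexHull] at hz

theorem idist_le_idiam {X : Set Pt} {p q : Pt} (hp : p ∈ X) (hq : q ∈ X) :
    idist X p q ≤ idiam X :=
  (le_iSup₂ (f := fun q _ => idist X p q) q hq).trans (le_iSup₂ (f := fun p _ => ecc X p) p hp)

theorem ofReal_lt_idist_of_forall_lt {X : Set Pt} {x₁ x₂ y₁ y₂ p q : Pt}
    (hx : IsClosed (X \ openSegment ℝ x₁ x₂)) (hy : IsClosed (X \ openSegment ℝ y₁ y₂))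
    (hxy : Disjoint (segment ℝ x₁ x₂) (segment ℝ y₁ y₂)) (hp : p ∈ openSegment ℝ x₁ x₂)
    (hq : q ∈ openSegment ℝ y₁ y₂) {s : ℝ}
    (hs : ∀ x ∈ ({x₁, x₂} : Set Pt), ∀ y ∈ ({y₁, y₂} : Set Pt),
      s < dist p x + dist x y + dist y q) :
    ENNReal.ofReal s < idist X p q := by
  have hends : ∀ a b : Pt, ({a, b} : Set Pt) ⊆ segment ℝ a b := fun a b =>
    convexHull_pair (𝕜 := ℝ) a b ▸ subset_convexHull ℝ _
  obtain ⟨⟨x, y⟩, ⟨hx₀, hy₀⟩, hmin⟩ := exists_min_image (({x₁, x₂} : Set Pt) ×ˢ {y₁, y₂})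
    (fun v => dist p v.1 + dist v.1 v.2 + dist v.2 q) ((toFinite _).prod (toFinite _))
    ⟨(x₁, y₁), by simp⟩
  have hxy₀ : 0 < dist x y := dist_pos.2 (hxy.ne_of_mem (hends _ _ hx₀) (hends _ _ hy₀))
  refine (ENNReal.ofReal_lt_ofReal_iff'.2 ⟨hs x hx₀ y hy₀, by positivity⟩).trans_le ?_
  refine le_iInf fun γ => le_iInf fun hγ => le_iInf fun hγX => le_iInf fun h₀ =>
    le_iInf fun h₁ => ?_
  have hq' : γ 1 ∉ openSegment ℝ x₁ x₂ := fun h => disjoint_left.1 hxy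
    (openSegment_subset_segment ℝ _ _ h) (openSegment_subset_segment ℝ _ _ (h₁ ▸ hq))
  obtain ⟨t₁, ht₁, hx₁⟩ := exists_mem_pair_of_isClosed_diff_openSegment hx hγ hγX
    (left_mem_Icc.2 zero_le_one) (right_mem_Icc.2 zero_le_one) (h₀ ▸ hp) hq'
  have hsub : Icc t₁ 1 ⊆ Icc 0 1 := Icc_subset_Icc_left ht₁.1
  obtain ⟨t₂, ht₂, hy₂⟩ := exists_mem_pair_of_isClosed_diff_openSegment hy (hγ.mono hsub)
    ((image_mono hsub).trans hγX) (right_mem_Icc.2 ht₁.2) (left_mem_Icc.2 ht₁.2) (h₁ ▸ hq)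
    fun h => disjoint_left.1 hxy (hends _ _ hx₁) (openSegment_subset_segment ℝ _ _ h)
  calc ENNReal.ofReal (dist p x + dist x y + dist y q)
      ≤ ENNReal.ofReal (dist p (γ t₁) + dist (γ t₁) (γ t₂) + dist (γ t₂) q) :=
        ENNReal.ofReal_le_ofReal (hmin (γ t₁, γ t₂) ⟨hx₁, hy₂⟩)
    _ = edist (γ 0) (γ t₁) + edist (γ t₁) (γ t₂) + edist (γ t₂) (γ 1) := by
        rw [h₀, h₁, edist_dist, edist_dist, edist_dist, ← ENNReal.ofReal_add,
          ← ENNReal.ofReal_add] <;> positivity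
    _ ≤ eVariationOn γ (Icc 0 1) :=
        edist_add_edist_add_edist_le_eVariationOn γ ht₁.1 ht₂.1 ht₂.2

section K4

variable {u₁ u₂ u₃ u₄ : Pt}

theorem isClosed_K4locus_diff_openSegment₃₄ (h₁₃₄ : ¬ Collinear ℝ {u₁, u₃, u₄})
    (h₂₃₄ : ¬ Collinear ℝ {u₂, u₃, u₄}) (hdisj : Disjoint (segment ℝ u₁ u₂) (segment ℝ u₃ u₄)) :
    IsClosed (K4locus u₁ u₂ u₃ u₄ \ openSegment ℝ u₃ u₄) := by
  rw [K4locus, union_comm]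
  refine isClosed_segment_union_diff_openSegment ((((((isClosed_segment _ _).union
    (isClosed_segment _ _)).union (isClosed_segment _ _)).union (isClosed_segment _ _)).union
    (isClosed_segment _ _))) (by simp [right_mem_segment]) (by simp [right_mem_segment]) ?_
  simp only [disjoint_union_right]
  refine ⟨⟨⟨⟨hdisj.symm.mono_left (openSegment_subset_segment ℝ _ _), ?_⟩, ?_⟩, ?_⟩, ?_⟩
  · rw [segment_symm]
    exact disjoint_openSegment_segment_of_not_collinear (by rwa [Set.pair_comm, Set.insert_comm])
  · rw [segment_symm, openSegment_symm]
    exact disjoint_openSegment_segment_of_not_collinear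
      (by rwa [Set.insert_comm, Set.pair_comm, Set.insert_comm])
  · rw [segment_symm]
    exact disjoint_openSegment_segment_of_not_collinear (by rwa [Set.pair_comm, Set.insert_comm])
  · rw [segment_symm, openSegment_symm]
    exact disjoint_openSegment_segment_of_not_collinear
      (by rwa [Set.insert_comm, Set.pair_comm, Set.insert_comm])

theorem isClosed_K4locus_diff_openSegment₁₂ (h₁₂₃ : ¬ Collinear ℝ {u₁, u₂, u₃})
    (h₁₂₄ : ¬ Collinear ℝ {u₁, u₂, u₄}) (hdisj : Disjoint (segment ℝ u₁ u₂) (segment ℝ u₃ u₄)) :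
    IsClosed (K4locus u₁ u₂ u₃ u₄ \ openSegment ℝ u₁ u₂) := by
  rw [show K4locus u₁ u₂ u₃ u₄ = segment ℝ u₁ u₂ ∪ (segment ℝ u₁ u₃ ∪ segment ℝ u₁ u₄ ∪
    segment ℝ u₂ u₃ ∪ segment ℝ u₂ u₄ ∪ segment ℝ u₃ u₄) by simp only [K4locus, union_assoc]]
  refine isClosed_segment_union_diff_openSegment ((((((isClosed_segment _ _).union
    (isClosed_segment _ _)).union (isClosed_segment _ _)).union (isClosed_segment _ _)).union
    (isClosed_segment _ _))) (by simp [left_mem_segment]) (by simp [left_mem_segment]) ?_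
  simp only [disjoint_union_right]
  refine ⟨⟨⟨⟨disjoint_openSegment_segment_of_not_collinear h₁₂₃,
    disjoint_openSegment_segment_of_not_collinear h₁₂₄⟩, ?_⟩, ?_⟩,
    hdisj.mono_left (openSegment_subset_segment ℝ _ _)⟩
  · rw [openSegment_symm]
    exact disjoint_openSegment_segment_of_not_collinear (by rwa [Set.insert_comm])
  · rw [openSegment_symm]
    exact disjoint_openSegment_segment_of_not_collinear (by rwa [Set.insert_comm])

end K4

/-- The intrinsic diameter of the locus of a plane embedding of `K₄`
strictly exceeds half the perimeter of the outer triangle. -/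
theorem stmt17 (u₁ u₂ u₃ u₄ : Pt)
    (hindep : AffineIndependent ℝ ![u₁, u₂, u₃])
    (hint : u₄ ∈ interior (convexHull ℝ ({u₁, u₂, u₃} : Set Pt))) :
    ENNReal.ofReal ((‖u₁ - u₂‖ + ‖u₂ - u₃‖ + ‖u₃ - u₁‖) / 2) <
      idiam (K4locus u₁ u₂ u₃ u₄) := by
  obtain ⟨b, hb, hpos⟩ := exists_affineBasis_coord_pos_of_mem_interior_convexHull hindep
    (by simpa only [Matrix.range_cons, Matrix.range_empty, union_empty, singleton_union])
  have h₁₂₃ : ¬ Collinear ℝ {u₁, u₂, u₃} := affineIndependent_iff_not_collinear_set.1 hindep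
  have h₁₂₄ : ¬ Collinear ℝ {u₁, u₂, u₄} := by
    simpa [hb] using b.not_collinear_of_coord_ne_zero (i := 2) (j := 0) (l := 1) (by decide)
      (by decide) (by decide) (hpos 2).ne'
  have h₁₃₄ : ¬ Collinear ℝ {u₁, u₃, u₄} := by
    simpa [hb] using b.not_collinear_of_coord_ne_zero (i := 1) (j := 0) (l := 2) (by decide)
      (by decide) (by decide) (hpos 1).ne'
  have h₂₃₄ : ¬ Collinear ℝ {u₂, u₃, u₄} := by
    simpa [hb] using b.not_collinear_of_coord_ne_zero (i := 0) (j := 1) (l := 2) (by decide)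
      (by decide) (by decide) (hpos 0).ne'
  have hdisj : Disjoint (segment ℝ u₁ u₂) (segment ℝ u₃ u₄) :=
    disjoint_segment_of_affineMap_nonpos_of_pos (b.coord 2)
      (by simpa [hb] using (b.coord_apply_ne (i := 2) (j := 0) (by decide)).le)
      (by simpa [hb] using (b.coord_apply_ne (i := 2) (j := 1) (by decide)).le)
      (by simpa [hb] using zero_lt_one.trans_eq (b.coord_apply_eq 2).symm) (hpos 2)
  obtain ⟨p, hp, q, hq, hroutes⟩ := exists_mem_openSegment_half_perimeter_lt h₁₃₄ h₂₃₄ h₁₂₃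
  rw [← dist_eq_norm, ← dist_eq_norm, ← dist_eq_norm]
  refine (ofReal_lt_idist_of_forall_lt (isClosed_K4locus_diff_openSegment₃₄ h₁₃₄ h₂₃₄ hdisj)
    (isClosed_K4locus_diff_openSegment₁₂ h₁₂₃ h₁₂₄ hdisj) hdisj.symm hp hq hroutes).trans_le
    (idist_le_idiam ?_ ?_)
  · exact mem_union_right _ (openSegment_subset_segment ℝ _ _ hp)
  · simp [K4locus, openSegment_subset_segment ℝ _ _ hq]
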